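/- arXiv:2303.01407 — 2 statements merged into one kernel-verified Lean document; each statement's English description precedes it below -/
import Mathlib

section
/- (Frink metrization) Let Y be a set and ρ : Y × Y → [0,∞) a symmetric function with ρ(x,y) = 0 iff x = y, satisfying the weak triangle inequality ρ(x,z) ≤ 2 max{ρ(x,y), ρ(y,z)} for all x,y,z. Then there exists a metric D on Y satisfying D(x,y) ≤ ρ(x,y) ≤ 4 D(x,y) for all x,y ∈ Y. -/
namespace Frink6

variable {Y : Type*} (ρ : Y → Y → ℝ)

def chainSum (f : ℕ → Y) (n : ℕ) : ℝ := ∑ i ∈ Finset.range n, ρ (f i) (f (i + 1))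

lemma chainSum_nonneg (hnonneg : ∀ x y, 0 ≤ ρ x y) (f : ℕ → Y) (n : ℕ) :
    0 ≤ chainSum ρ f n :=
  Finset.sum_nonneg fun _ _ => hnonneg _ _

lemma chainSum_succ (f : ℕ → Y) (n : ℕ) :
    chainSum ρ f (n + 1) = chainSum ρ f n + ρ (f n) (f (n + 1)) :=
  Finset.sum_range_succ _ n

lemma chainSum_one (f : ℕ → Y) : chainSum ρ f 1 = ρ (f 0) (f 1) := by
  simp [chainSum]

lemma chainSum_add (f : ℕ → Y) (n m : ℕ) :
    chainSum ρ f (n + m) = chainSum ρ f n + chainSum ρ (fun i => f (n + i)) m := by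
  induction m with
  | zero => simp [chainSum]
  | succ m ih =>
      rw [← Nat.add_assoc, chainSum_succ, ih, chainSum_succ, Nat.add_assoc]
      ring

noncomputable def bound (f : ℕ → Y) (n : ℕ) : ℝ :=
  if n ≤ 1 then chainSum ρ f n
  else 4 * chainSum ρ f n - 2 * ρ (f 0) (f 1) - 2 * ρ (f (n - 1)) (f n)

lemma bound_le (hnonneg : ∀ x y, 0 ≤ ρ x y) (f : ℕ → Y) (n : ℕ) :
    bound ρ f n ≤ 4 * chainSum ρ f n := by
  unfold bound
  split
  · nlinarith [chainSum_nonneg ρ hnonneg f n]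
  · nlinarith [hnonneg (f 0) (f 1), hnonneg (f (n - 1)) (f n)]

lemma frink (hnonneg : ∀ x y, 0 ≤ ρ x y)
    (hweak : ∀ x y z, ρ x z ≤ 2 * max (ρ x y) (ρ y z)) :
    ∀ n, ∀ f : ℕ → Y, 1 ≤ n → ρ (f 0) (f n) ≤ bound ρ f n := by
  intro n
  induction n using Nat.strong_induction_on with
  | _ n ih =>
    rcases n with _ | _ | n
    · intro f h; omega
    · intro f _; simp [bound, chainSum]
    · intro f _
      classical
      set T : ℝ := bound ρ f (n + 2) with hTdef
      have hT : T = 4 * chainSum ρ f (n + 2) - 2 * ρ (f 0) (f 1)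
          - 2 * ρ (f (n + 1)) (f (n + 2)) := by
        rw [hTdef, bound, if_neg (by omega)]
        norm_num
      -- the total sum splits as first edge + middle + last edge
      have hsplit : chainSum ρ f (n + 2)
          = ρ (f 0) (f 1) + chainSum ρ (fun i => f (1 + i)) n + ρ (f (n + 1)) (f (n + 2)) := by
        rw [chainSum_succ]
        have h := chainSum_add ρ f 1 n
        rw [Nat.add_comm 1 n] at h
        rw [h, chainSum_one]
      have hmid : 0 ≤ chainSum ρ (fun i => f (1 + i)) n := chainSum_nonneg ρ hnonneg _ _
      have hρ01 : 0 ≤ ρ (f 0) (f 1) := hnonneg _ _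
      have hρlast : 0 ≤ ρ (f (n + 1)) (f (n + 2)) := hnonneg _ _
      set P : ℕ → Prop := fun m => 2 * bound ρ f m ≤ T with hPdef
      have hP1 : P 1 := by
        show 2 * bound ρ f 1 ≤ T
        rw [bound, if_pos (by omega), chainSum_one, hT]
        linarith
      set m : ℕ := Nat.findGreatest P (n + 1) with hmdef
      have hm1 : 1 ≤ m := Nat.le_findGreatest (by omega) hP1
      have hmle : m ≤ n + 1 := Nat.findGreatest_le _
      have hPm : 2 * bound ρ f m ≤ T := Nat.findGreatest_spec (P := P) (by omega) hP1
      -- the shifted suffix chain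
      set g : ℕ → Y := fun i => f (m + i) with hgdef
      have hg0 : g 0 = f m := rfl
      have hgend : g (n + 2 - m) = f (n + 2) := by
        show f (m + (n + 2 - m)) = f (n + 2)
        congr 1; omega
      have hsuf : ρ (f m) (f (n + 2)) ≤ bound ρ g (n + 2 - m) := by
        have := ih (n + 2 - m) (by omega) g (by omega)
        rwa [hg0, hgend] at this
      have hgsum : chainSum ρ g (n + 2 - m) = chainSum ρ f (n + 2) - chainSum ρ f m := by
        have h := chainSum_add ρ f m (n + 2 - m)
        rw [show m + (n + 2 - m) = n + 2 by omega] at h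
        linarith
      have h2suf : 2 * bound ρ g (n + 2 - m) ≤ T := by
        rcases eq_or_lt_of_le hmle with heq | hlt
        · -- m = n+1 : suffix is a single edge
          rw [show n + 2 - m = 1 by omega, bound, if_pos (le_refl 1), chainSum_one]
          have h1 : g 1 = f (n + 2) := by
            show f (m + 1) = f (n + 2); congr 1; omega
          rw [hg0, h1, heq, hT]
          linarith
        · -- m < n+1 : use maximality of m
          have hnP : ¬ P (m + 1) :=
            Nat.findGreatest_is_greatest (n := n + 1) (by omega) (by omega)
          have hgt : T < 2 * bound ρ f (m + 1) := by
            by_contra hc; exact hnP (by push_neg at hc; exact hc)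
          have hbm1 : bound ρ f (m + 1) = 4 * chainSum ρ f (m + 1) - 2 * ρ (f 0) (f 1)
              - 2 * ρ (f m) (f (m + 1)) := by
            rw [bound, if_neg (by omega)]
            norm_num
          have hsucc : chainSum ρ f (m + 1) = chainSum ρ f m + ρ (f m) (f (m + 1)) :=
            chainSum_succ ρ f m
          have hbg : bound ρ g (n + 2 - m) = 4 * (chainSum ρ f (n + 2) - chainSum ρ f m)
              - 2 * ρ (f m) (f (m + 1)) - 2 * ρ (f (n + 1)) (f (n + 2)) := by
            rw [bound, if_neg (by omega), hgsum]
            have e1 : g 1 = f (m + 1) := rfl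
            have e2 : g (n + 2 - m - 1) = f (n + 1) := by
              show f (m + (n + 2 - m - 1)) = f (n + 1); congr 1; omega
            rw [hg0, e1, e2, hgend]
          -- identity: bound f (m+1) + bound g (n+2-m) = T
          rw [hbg]
          rw [hbm1, hsucc] at hgt
          rw [hT]
          linarith
      -- combine with the weak triangle inequality
      have hpre : ρ (f 0) (f m) ≤ bound ρ f m := ih m (by omega) f (by omega)
      have h1 : 2 * ρ (f 0) (f m) ≤ T := by linarith
      have h2 : 2 * ρ (f m) (f (n + 2)) ≤ T := by linarith
      calc ρ (f 0) (f (n + 2)) ≤ 2 * max (ρ (f 0) (f m)) (ρ (f m) (f (n + 2))) :=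
            hweak _ _ _
        _ ≤ T := by
            rcases le_total (ρ (f 0) (f m)) (ρ (f m) (f (n + 2))) with h | h
            · rw [max_eq_right h]; exact h2
            · rw [max_eq_left h]; exact h1

lemma frink' (hnonneg : ∀ x y, 0 ≤ ρ x y)
    (hweak : ∀ x y z, ρ x z ≤ 2 * max (ρ x y) (ρ y z))
    (n : ℕ) (f : ℕ → Y) (hn : 1 ≤ n) :
    ρ (f 0) (f n) ≤ 4 * chainSum ρ f n :=
  le_trans (frink ρ hnonneg hweak n f hn) (bound_le ρ hnonneg f n)

end Frink6
/-- **Frink metrization.** If `ρ : Y × Y → [0,∞)` is symmetric, vanishes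
exactly on the diagonal, and satisfies the weak triangle inequality
`ρ(x,z) ≤ 2 max{ρ(x,y), ρ(y,z)}`, then there is a genuine metric `D` on `Y` with
`D ≤ ρ ≤ 4D`. -/
theorem statement6 {Y : Type*} (ρ : Y → Y → ℝ)
    (hnonneg : ∀ x y, 0 ≤ ρ x y)
    (hsymm : ∀ x y, ρ x y = ρ y x)
    (hzero : ∀ x y, ρ x y = 0 ↔ x = y)
    (hweak : ∀ x y z, ρ x z ≤ 2 * max (ρ x y) (ρ y z)) :
    ∃ D : Y → Y → ℝ,
      (∀ x y, 0 ≤ D x y) ∧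
      (∀ x y, D x y = D y x) ∧
      (∀ x y, D x y = 0 ↔ x = y) ∧
      (∀ x y z, D x z ≤ D x y + D y z) ∧
      (∀ x y, D x y ≤ ρ x y ∧ ρ x y ≤ 4 * D x y) := by
  classical
  open Frink6 in
  -- the set of sums of chains from `x` to `y`
  set Ch : Y → Y → Set ℝ := fun x y =>
    {s | ∃ n : ℕ, ∃ f : ℕ → Y, 1 ≤ n ∧ f 0 = x ∧ f n = y ∧ s = chainSum ρ f n} with hCh
  have hmemρ : ∀ x y, ρ x y ∈ Ch x y := by
    intro x y
    refine ⟨1, fun i => if i = 0 then x else y, le_refl 1, by simp, by simp, ?_⟩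
    rw [chainSum_one]
    simp
  have hne : ∀ x y, (Ch x y).Nonempty := fun x y => ⟨ρ x y, hmemρ x y⟩
  have hlb : ∀ x y, ∀ s ∈ Ch x y, ρ x y / 4 ≤ s := by
    rintro x y s ⟨n, f, hn, hf0, hfn, rfl⟩
    have := frink' ρ hnonneg hweak n f hn
    rw [hf0, hfn] at this
    linarith
  have hbdd : ∀ x y, BddBelow (Ch x y) := fun x y => ⟨ρ x y / 4, hlb x y⟩
  set D : Y → Y → ℝ := fun x y => sInf (Ch x y) with hD
  have hDle : ∀ x y, D x y ≤ ρ x y := fun x y => csInf_le (hbdd x y) (hmemρ x y)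
  have hDge : ∀ x y, ρ x y / 4 ≤ D x y := fun x y => le_csInf (hne x y) (hlb x y)
  have hDnonneg : ∀ x y, 0 ≤ D x y := fun x y =>
    le_trans (by linarith [hnonneg x y]) (hDge x y)
  -- symmetry, by reversing chains
  have hChsub : ∀ x y, Ch x y ⊆ Ch y x := by
    rintro x y s ⟨n, f, hn, hf0, hfn, rfl⟩
    refine ⟨n, fun i => f (n - i), hn, by simpa, by simpa, ?_⟩
    unfold chainSum
    rw [← Finset.sum_range_reflect]
    apply Finset.sum_congr rfl
    intro i hi
    rw [Finset.mem_range] at hi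
    have e1 : n - 1 - i + 1 = n - i := by omega
    rw [e1]
    show ρ (f (n - 1 - i)) (f (n - i)) = ρ (f (n - i)) (f (n - (i + 1)))
    rw [show n - (i + 1) = n - 1 - i from by omega]
    exact hsymm _ _
  have hDsymm : ∀ x y, D x y = D y x := by
    intro x y
    have h : Ch x y = Ch y x := le_antisymm (hChsub x y) (hChsub y x)
    show sInf (Ch x y) = sInf (Ch y x)
    rw [h]
  -- triangle inequality, by concatenating chains
  have hkey : ∀ x y z : Y, ∀ a ∈ Ch x y, ∀ b ∈ Ch y z, a + b ∈ Ch x z := by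
    rintro x y z a ⟨n, f, hn, hf0, hfn, rfl⟩ b ⟨k, g, hk, hg0, hgk, rfl⟩
    set h : ℕ → Y := fun i => if i ≤ n then f i else g (i - n) with hh
    refine ⟨n + k, h, by omega, ?_, ?_, ?_⟩
    · show (if 0 ≤ n then f 0 else g (0 - n)) = x
      rw [if_pos (Nat.zero_le n)]; exact hf0
    · show (if n + k ≤ n then f (n + k) else g (n + k - n)) = z
      rw [if_neg (by omega), Nat.add_sub_cancel_left]; exact hgk
    · rw [chainSum_add]
      congr 1
      · apply Finset.sum_congr rfl
        intro i hi
        rw [Finset.mem_range] at hi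
        have e1 : h i = f i := if_pos (by omega)
        have e2 : h (i + 1) = f (i + 1) := if_pos (by omega)
        rw [e1, e2]
      · apply Finset.sum_congr rfl
        intro i hi
        rw [Finset.mem_range] at hi
        have e2 : h (n + i + 1) = g (i + 1) := by
          rw [hh]; simp only []
          rw [if_neg (by omega)]
          congr 1; omega
        rcases Nat.eq_zero_or_pos i with rfl | hip
        · have e1 : h (n + 0) = g 0 := by
            show (if n + 0 ≤ n then f (n + 0) else g (n + 0 - n)) = g 0
            rw [if_pos (by omega), Nat.add_zero, hfn, hg0]
          show ρ (g 0) (g (0 + 1)) = ρ (h (n + 0)) (h (n + 0 + 1))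
          rw [e1, e2]
        · have e1 : h (n + i) = g i := by
            rw [hh]; simp only []
            rw [if_neg (by omega)]
            congr 1; omega
          show ρ (g i) (g (i + 1)) = ρ (h (n + i)) (h (n + i + 1))
          rw [e1, e2]
  have hDtri : ∀ x y z, D x z ≤ D x y + D y z := by
    intro x y z
    have step : ∀ a ∈ Ch x y, D x z - a ≤ D y z := by
      intro a ha
      refine le_csInf (hne y z) ?_
      intro b hb
      have h' : D x z ≤ a + b := csInf_le (hbdd x z) (hkey x y z a ha b hb)
      linarith
    have : D x z - D y z ≤ D x y := by
      refine le_csInf (hne x y) ?_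
      intro a ha
      linarith [step a ha]
    linarith
  have hDzero : ∀ x y, D x y = 0 ↔ x = y := by
    intro x y
    constructor
    · intro h
      have := hDge x y
      rw [h] at this
      have : ρ x y = 0 := le_antisymm (by linarith) (hnonneg x y)
      exact (hzero x y).mp this
    · rintro rfl
      have h0 : ρ x x = 0 := (hzero x x).mpr rfl
      exact le_antisymm (by rw [← h0]; exact hDle x x) (hDnonneg x x)
  exact ⟨D, hDnonneg, hDsymm, hDzero, hDtri, fun x y =>
    ⟨hDle x y, by linarith [hDge x y]⟩⟩
end

section
/- Let (Y,d) be a compact metric space, f : Y → Y continuous, and let SL_d(f) := sup_{ε>0} inf_{0 < d(x,y) < ε} d(fx,fy)/d(x,y) denote the local skewness. If SL_d(f) > 1 then the topological entropy satisfies h_top(f) ≥ HD(d) · ln SL_d(f), where HD(d) is the Hausdorff dimension of (Y,d). -/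
open Filter Metric Set MeasureTheory
open scoped NNReal ENNReal

/-- Maximal cardinality of an `(n, ε)`-separated set for the iterates of `f`. -/
noncomputable def sepNum {Y : Type*} [MetricSpace Y] (f : Y → Y) (n : ℕ) (ε : ℝ) : ℕ :=
  sSup {k : ℕ | ∃ S : Finset Y, S.card = k ∧
    ∀ x ∈ S, ∀ y ∈ S, x ≠ y → ∃ j < n, ε ≤ dist (f^[j] x) (f^[j] y)}

/-- Topological entropy via separated sets. -/
noncomputable def htop {Y : Type*} [MetricSpace Y] (f : Y → Y) : ℝ :=
  sSup {h : ℝ | ∃ ε > (0 : ℝ),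
    h = limsup (fun n : ℕ => Real.log (sepNum f n ε) / n) atTop}

/-- Bowen separation predicate. -/
def BSep {Y : Type*} [MetricSpace Y] (f : Y → Y) (n : ℕ) (ε : ℝ) (S : Finset Y) : Prop :=
  ∀ x ∈ S, ∀ y ∈ S, x ≠ y → ∃ j < n, ε ≤ dist (f^[j] x) (f^[j] y)

section Aux
variable {Y : Type*} [MetricSpace Y]

lemma expand_sep {f : Y → Y} {β ε : ℝ} (hβ : 1 < β) (hε : 0 < ε)
    (hexp : ∀ x y : Y, 0 < dist x y → dist x y < ε → β * dist x y ≤ dist (f x) (f y)) :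
    ∀ (m : ℕ) (a b : Y), ε ≤ β ^ m * dist a b → ∃ i ≤ m, ε ≤ dist (f^[i] a) (f^[i] b) := by
  intro m
  induction m with
  | zero => intro a b h; exact ⟨0, le_refl 0, by simpa using h⟩
  | succ m ih =>
    intro a b h
    by_cases hab : ε ≤ dist a b
    · exact ⟨0, Nat.zero_le _, by simpa using hab⟩
    · push_neg at hab
      have hβ0 : (0:ℝ) < β := by linarith
      have hd : 0 < dist a b := by
        rcases (dist_nonneg (x := a) (y := b)).lt_or_eq with h'|h'
        · exact h'
        · exfalso; rw [← h', mul_zero] at h; linarith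
      have h1 : β * dist a b ≤ dist (f a) (f b) := hexp a b hd hab
      have h2 : ε ≤ β ^ m * dist (f a) (f b) := by
        have he : β ^ (m+1) * dist a b = β ^ m * (β * dist a b) := by ring
        calc ε ≤ β ^ m * (β * dist a b) := by rw [← he]; exact h
          _ ≤ β ^ m * dist (f a) (f b) :=
            mul_le_mul_of_nonneg_left h1 (pow_nonneg hβ0.le m)
      obtain ⟨i, him, hi⟩ := ih (f a) (f b) h2
      refine ⟨i+1, Nat.succ_le_succ him, ?_⟩
      simpa [Function.iterate_succ_apply] using hi

lemma exists_net [CompactSpace Y] (ρ : ℝ) (hρ : 0 < ρ) :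
    ∃ T : Finset Y, ∀ y : Y, ∃ t ∈ T, dist y t < ρ := by
  have htb : TotallyBounded (Set.univ : Set Y) := isCompact_univ.totallyBounded
  obtain ⟨t, htf, hcov⟩ := (Metric.totallyBounded_iff.1 htb) ρ hρ
  refine ⟨htf.toFinset, fun y => ?_⟩
  have := hcov (mem_univ y)
  simp only [mem_iUnion, exists_prop] at this
  obtain ⟨c, hc, hyc⟩ := this
  exact ⟨c, htf.mem_toFinset.2 hc, by simpa [Metric.mem_ball] using hyc⟩

lemma card_le_of_BSep {f : Y → Y} {ε : ℝ} {T : Finset Y}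
    (hT : ∀ y : Y, ∃ t ∈ T, dist y t < ε / 2)
    {n : ℕ} {S : Finset Y} (hS : BSep f n ε S) : S.card ≤ T.card ^ n := by
  classical
  choose φ hφT hφd using hT
  have hinj : Set.InjOn (fun x => fun j : Fin n => φ (f^[(j:ℕ)] x)) (S : Set Y) := by
    intro x hx y hy hxy
    by_contra hne
    obtain ⟨j, hj, hsep⟩ := hS x hx y hy hne
    have h1 := hφd (f^[j] x)
    have h2 := hφd (f^[j] y)
    have heq : φ (f^[j] x) = φ (f^[j] y) := by
      have := congrFun hxy (⟨j, hj⟩ : Fin n)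
      simpa using this
    have hlt : dist (f^[j] x) (f^[j] y) < ε := by
      have htr : dist (f^[j] x) (f^[j] y) ≤
          dist (f^[j] x) (φ (f^[j] x)) + dist (φ (f^[j] y)) (f^[j] y) := by
        rw [heq]; exact dist_triangle _ _ _
      rw [dist_comm (φ (f^[j] y))] at htr
      linarith
    linarith
  have hmap : ∀ x ∈ S, (fun j : Fin n => φ (f^[(j:ℕ)] x)) ∈
      Fintype.piFinset (fun _ : Fin n => T) := by
    intro x hx
    rw [Fintype.mem_piFinset]
    intro j
    exact hφT _
  calc S.card ≤ (Fintype.piFinset (fun _ : Fin n => T)).card :=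
        Finset.card_le_card_of_injOn _ hmap hinj
    _ = T.card ^ n := by simp [Fintype.card_piFinset]

lemma bsep_shift {f : Y → Y} {β ε : ℝ} (hβ : 1 < β) (hε : 0 < ε)
    (hexp : ∀ x y : Y, 0 < dist x y → dist x y < ε → β * dist x y ≤ dist (f x) (f y))
    {δ : ℝ} (hδ : 0 < δ) :
    ∃ m : ℕ, ∀ (n : ℕ) (S : Finset Y), BSep f n δ S → BSep f (n + m) ε S := by
  obtain ⟨m, hm⟩ := pow_unbounded_of_one_lt (ε / δ) hβ
  refine ⟨m, fun n S hS x hx y hy hne => ?_⟩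
  obtain ⟨j, hj, hd⟩ := hS x hx y hy hne
  have hεm : ε ≤ β ^ m * dist (f^[j] x) (f^[j] y) := by
    have h1 : ε < β ^ m * δ := by
      rw [div_lt_iff₀ hδ] at hm; linarith
    have h2 : β ^ m * δ ≤ β ^ m * dist (f^[j] x) (f^[j] y) :=
      mul_le_mul_of_nonneg_left hd (pow_nonneg (by linarith) m)
    linarith
  obtain ⟨i, him, hi⟩ := expand_sep hβ hε hexp m (f^[j] x) (f^[j] y) hεm
  refine ⟨i + j, by omega, ?_⟩
  rw [Function.iterate_add_apply, Function.iterate_add_apply]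
  exact hi

lemma sepNum_sSup (f : Y → Y) (n : ℕ) (ε : ℝ) :
    sepNum f n ε = sSup {k : ℕ | ∃ S : Finset Y, S.card = k ∧ BSep f n ε S} := rfl

lemma zero_mem_sepSet (f : Y → Y) (n : ℕ) (ε : ℝ) :
    0 ∈ {k : ℕ | ∃ S : Finset Y, S.card = k ∧ BSep f n ε S} :=
  ⟨∅, Finset.card_empty, fun x hx => absurd hx (by simp)⟩

lemma sepNum_bounds {f : Y → Y} {β ε : ℝ} (hβ : 1 < β) (hε : 0 < ε)
    (hexp : ∀ x y : Y, 0 < dist x y → dist x y < ε → β * dist x y ≤ dist (f x) (f y))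
    {δ : ℝ} (hδ : 0 < δ) {T : Finset Y} (hT : ∀ y : Y, ∃ t ∈ T, dist y t < ε / 2) :
    ∃ m : ℕ, ∀ n : ℕ, BddAbove {k : ℕ | ∃ S : Finset Y, S.card = k ∧ BSep f n δ S} ∧
      sepNum f n δ ≤ T.card ^ (n + m) ∧
      ∀ S : Finset Y, BSep f n δ S → S.card ≤ sepNum f n δ := by
  obtain ⟨m, hm⟩ := bsep_shift hβ hε hexp hδ
  refine ⟨m, fun n => ?_⟩
  have hub : ∀ k ∈ {k : ℕ | ∃ S : Finset Y, S.card = k ∧ BSep f n δ S}, k ≤ T.card ^ (n + m) := by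
    rintro k ⟨S, rfl, hS⟩
    exact card_le_of_BSep hT (hm n S hS)
  have hbdd : BddAbove {k : ℕ | ∃ S : Finset Y, S.card = k ∧ BSep f n δ S} := ⟨_, hub⟩
  refine ⟨hbdd, ?_, ?_⟩
  · rw [sepNum_sSup]
    exact csSup_le ⟨0, zero_mem_sepSet f n δ⟩ hub
  · intro S hS
    rw [sepNum_sSup]
    exact le_csSup hbdd ⟨S, rfl, hS⟩

lemma sepNum_seq_nonneg (f : Y → Y) (δ : ℝ) (n : ℕ) :
    0 ≤ Real.log (sepNum f n δ) / n :=
  div_nonneg (Real.log_natCast_nonneg _) (Nat.cast_nonneg n)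

lemma eventually_sepNum_le {f : Y → Y} {β ε : ℝ} (hβ : 1 < β) (hε : 0 < ε)
    (hexp : ∀ x y : Y, 0 < dist x y → dist x y < ε → β * dist x y ≤ dist (f x) (f y))
    {δ : ℝ} (hδ : 0 < δ) {T : Finset Y} (hT : ∀ y : Y, ∃ t ∈ T, dist y t < ε / 2) :
    ∀ᶠ n in atTop, Real.log (sepNum f n δ) / n ≤ 2 * Real.log T.card := by
  obtain ⟨m, hm⟩ := sepNum_bounds hβ hε hexp hδ hT
  filter_upwards [eventually_ge_atTop (max m 1)] with n hn
  have hn1 : 1 ≤ n := le_trans (le_max_right m 1) hn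
  have hnm : m ≤ n := le_trans (le_max_left m 1) hn
  have hlog : Real.log (sepNum f n δ) ≤ (n + m : ℕ) * Real.log T.card := by
    have hb := (hm n).2.1
    rcases Nat.eq_zero_or_pos (sepNum f n δ) with h0 | h0
    · rw [h0]
      simp only [Nat.cast_zero, Real.log_zero]
      positivity
    · calc Real.log (sepNum f n δ) ≤ Real.log ((T.card : ℝ) ^ (n + m)) := by
            exact Real.log_le_log (by exact_mod_cast h0) (by exact_mod_cast hb)
        _ = (n + m : ℕ) * Real.log T.card := by
            rw [Real.log_pow]
  have hnpos : (0:ℝ) < n := by exact_mod_cast hn1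
  rw [div_le_iff₀ hnpos]
  calc Real.log (sepNum f n δ) ≤ (n + m : ℕ) * Real.log T.card := hlog
    _ ≤ (2 * n) * Real.log T.card := by
        apply mul_le_mul_of_nonneg_right _ (Real.log_natCast_nonneg _)
        push_cast
        have : (m:ℝ) ≤ n := by exact_mod_cast hnm
        linarith
    _ = 2 * Real.log T.card * n := by ring

lemma limsup_sepNum_le {f : Y → Y} {β ε : ℝ} (hβ : 1 < β) (hε : 0 < ε)
    (hexp : ∀ x y : Y, 0 < dist x y → dist x y < ε → β * dist x y ≤ dist (f x) (f y))
    {δ : ℝ} (hδ : 0 < δ) {T : Finset Y} (hT : ∀ y : Y, ∃ t ∈ T, dist y t < ε / 2) :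
    limsup (fun n : ℕ => Real.log (sepNum f n δ) / n) atTop ≤ 2 * Real.log T.card :=
  limsup_le_of_le (isCoboundedUnder_le_of_le atTop (sepNum_seq_nonneg f δ))
    (eventually_sepNum_le hβ hε hexp hδ hT)

lemma exists_maximal_separated {f : Y → Y} {β ε : ℝ} (hβ : 1 < β) (hε : 0 < ε)
    (hexp : ∀ x y : Y, 0 < dist x y → dist x y < ε → β * dist x y ≤ dist (f x) (f y))
    {T : Finset Y} (hT : ∀ y : Y, ∃ t ∈ T, dist y t < ε / 2) {r : ℝ} (hr : 0 < r) :
    ∃ S : Finset Y, BSep f 1 r S ∧ ∀ y : Y, ∃ x ∈ S, dist y x < r := by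
  classical
  obtain ⟨m, hm⟩ := sepNum_bounds hβ hε hexp hr hT
  obtain ⟨hbdd, -, hle⟩ := hm 1
  have hmem : sepNum f 1 r ∈ {k : ℕ | ∃ S : Finset Y, S.card = k ∧ BSep f 1 r S} := by
    rw [sepNum_sSup]
    exact Nat.sSup_mem ⟨0, zero_mem_sepSet f 1 r⟩ hbdd
  obtain ⟨S, hcard, hsep⟩ := hmem
  refine ⟨S, hsep, fun y => ?_⟩
  by_contra hcon
  push_neg at hcon
  have hyS : y ∉ S := fun hy => by
    have := hcon y hy
    simp only [dist_self] at this
    linarith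
  have hsep' : BSep f 1 r (insert y S) := by
    intro a ha b hb hab
    refine ⟨0, Nat.zero_lt_one, ?_⟩
    simp only [Function.iterate_zero_apply]
    rcases Finset.mem_insert.1 ha with rfl | ha'
    · rcases Finset.mem_insert.1 hb with rfl | hb'
      · exact absurd rfl hab
      · exact hcon b hb'
    · rcases Finset.mem_insert.1 hb with rfl | hb'
      · rw [dist_comm]; exact hcon a ha'
      · obtain ⟨j, hj, hd⟩ := hsep a ha' b hb' hab
        interval_cases j
        simpa using hd
  have := hle _ hsep'
  rw [Finset.card_insert_of_notMem hyS, hcard] at this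
  omega

/-- The main lower bound. -/
lemma le_limsup_sepNum [CompactSpace Y] {f : Y → Y} {β ε : ℝ} (hβ : 1 < β) (hε : 0 < ε)
    (hexp : ∀ x y : Y, 0 < dist x y → dist x y < ε → β * dist x y ≤ dist (f x) (f y))
    {T : Finset Y} (hT : ∀ y : Y, ∃ t ∈ T, dist y t < ε / 2) (s : ℝ≥0)
    (hs : (s : ℝ≥0∞) < dimH (univ : Set Y)) :
    (s : ℝ) * Real.log β ≤ limsup (fun n : ℕ => Real.log (sepNum f n ε) / n) atTop := by
  classical
  borelize Y
  have hβ0 : (0:ℝ) < β := by linarith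
  have hμ : μH[(s:ℝ)] (univ : Set Y) = ∞ := hausdorffMeasure_of_lt_dimH hs
  set r : ℕ → ℝ := fun n => ε / β ^ n with hr_def
  have hrpos : ∀ n, 0 < r n := fun n => div_pos hε (pow_pos hβ0 n)
  choose S hSsep hScov using fun n => exists_maximal_separated hβ hε hexp hT (hrpos n)
  -- each S n is (n+1, ε)-separated
  have hBsep : ∀ n, BSep f (n + 1) ε (S n) := by
    intro n x hx y hy hxy
    obtain ⟨j, hj, hd⟩ := hSsep n x hx y hy hxy
    interval_cases j
    simp only [Function.iterate_zero_apply] at hd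
    have hεd : ε ≤ β ^ n * dist x y := by
      rw [hr_def] at hd
      rw [div_le_iff₀ (pow_pos hβ0 n)] at hd
      linarith [hd]
    obtain ⟨i, him, hi⟩ := expand_sep hβ hε hexp n x y hεd
    exact ⟨i, by omega, hi⟩
  obtain ⟨m, hm⟩ := sepNum_bounds hβ hε hexp hε hT
  have hcard_le : ∀ n, (S n).card ≤ sepNum f (n + 1) ε := fun n =>
    (hm (n + 1)).2.2 _ (hBsep n)
  -- Hausdorff measure cover bound
  have hcover : μH[(s:ℝ)] (univ : Set Y) ≤
      liminf (fun n => ∑' i : (S n : Finset Y), EMetric.diam (ball (i : Y) (r n)) ^ (s:ℝ)) atTop := by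
    apply MeasureTheory.Measure.hausdorffMeasure_le_liminf_tsum (s:ℝ) _ (fun n => ENNReal.ofReal (2 * r n))
    · -- tendsto 0
      have : Filter.Tendsto (fun n : ℕ => 2 * r n) atTop (nhds 0) := by
        have hgeo : Filter.Tendsto (fun n : ℕ => (β⁻¹) ^ n) atTop (nhds 0) :=
          tendsto_pow_atTop_nhds_zero_of_lt_one (by positivity) (by
            rw [inv_lt_one_iff₀]; right; exact hβ)
        have := hgeo.const_mul (2 * ε)
        rw [mul_zero] at this
        convert this using 2 with n
        rw [hr_def]
        field_simp
        rw [← mul_pow, mul_one_div_cancel hβ0.ne', one_pow]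
      have h2 := ENNReal.tendsto_ofReal this
      simpa using h2
    · -- diam bound
      filter_upwards with n i
      apply EMetric.diam_le
      intro x hx y hy
      rw [edist_dist]
      apply ENNReal.ofReal_le_ofReal
      rw [mem_ball] at hx hy
      have := dist_triangle x (i : Y) y
      rw [dist_comm (i:Y) y] at this
      linarith
    · -- cover
      filter_upwards with n
      intro y _
      obtain ⟨x, hxS, hxd⟩ := hScov n y
      exact mem_iUnion.2 ⟨⟨x, hxS⟩, by simpa [mem_ball] using hxd⟩
  -- bound the tsum
  have htsum_le : ∀ n, (∑' i : (S n : Finset Y), EMetric.diam (ball (i : Y) (r n)) ^ (s:ℝ)) ≤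
      ((S n).card : ℝ≥0∞) * ENNReal.ofReal (2 * r n) ^ (s:ℝ) := by
    intro n
    rw [tsum_fintype]
    calc (∑ i : (S n : Finset Y), EMetric.diam (ball (i : Y) (r n)) ^ (s:ℝ))
        ≤ ∑ _i : (S n : Finset Y), ENNReal.ofReal (2 * r n) ^ (s:ℝ) := by
          apply Finset.sum_le_sum
          intro i _
          apply ENNReal.rpow_le_rpow _ s.coe_nonneg
          apply EMetric.diam_le
          intro x hx y hy
          rw [edist_dist]
          apply ENNReal.ofReal_le_ofReal
          rw [mem_ball] at hx hy
          have := dist_triangle x (i : Y) y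
          rw [dist_comm (i:Y) y] at this
          linarith
      _ = ((S n).card : ℝ≥0∞) * ENNReal.ofReal (2 * r n) ^ (s:ℝ) := by
          rw [Finset.sum_const, Finset.card_univ, Fintype.card_coe, nsmul_eq_mul]
  have hliminf : (⊤:ℝ≥0∞) ≤ liminf
      (fun n => ((S n).card : ℝ≥0∞) * ENNReal.ofReal (2 * r n) ^ (s:ℝ)) atTop := by
    rw [← hμ]
    exact hcover.trans (liminf_le_liminf (Eventually.of_forall htsum_le))
  have hev : ∀ᶠ n in atTop, (1:ℝ≥0∞) <
      ((S n).card : ℝ≥0∞) * ENNReal.ofReal (2 * r n) ^ (s:ℝ) := by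
    exact eventually_lt_of_lt_liminf (lt_of_lt_of_le (by simp) hliminf)
  -- convert to real
  have hreal : ∀ᶠ n in atTop, (1:ℝ) ≤ ((S n).card : ℝ) * (2 * r n) ^ (s:ℝ) := by
    filter_upwards [hev] with n hn
    have h2r : 0 < 2 * r n := by linarith [hrpos n]
    rw [ENNReal.ofReal_rpow_of_pos h2r] at hn
    rw [← ENNReal.ofReal_natCast, ← ENNReal.ofReal_mul (Nat.cast_nonneg _)] at hn
    exact (ENNReal.one_lt_ofReal.1 hn).le
  have hlogb : ∀ᶠ n : ℕ in atTop,
      (s:ℝ) * ((n:ℝ) * Real.log β - Real.log (2*ε)) ≤ Real.log (sepNum f (n+1) ε) := by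
    filter_upwards [hreal] with n hn
    have h2r : 0 < 2 * r n := by linarith [hrpos n]
    have hcardpos : 0 < ((S n).card : ℝ) := by
      by_contra hc
      push_neg at hc
      have h0 : ((S n).card : ℝ) = 0 := le_antisymm hc (Nat.cast_nonneg _)
      rw [h0, zero_mul] at hn
      linarith
    have hlog : 0 ≤ Real.log ((S n).card) + (s:ℝ) * Real.log (2 * r n) := by
      have h1 := Real.log_le_log (by norm_num) hn
      rw [Real.log_one] at h1
      rw [Real.log_mul (ne_of_gt hcardpos) (by positivity), Real.log_rpow h2r] at h1
      linarith
    have h2rn : Real.log (2 * r n) = Real.log (2*ε) - (n:ℝ) * Real.log β := by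
      rw [hr_def]
      simp only []
      rw [show 2 * (ε / β ^ n) = (2*ε) / β ^ n by ring]
      rw [Real.log_div (by positivity) (by positivity), Real.log_pow]
    have hcard_log : (s:ℝ) * ((n:ℝ) * Real.log β - Real.log (2*ε)) ≤ Real.log ((S n).card) := by
      rw [h2rn] at hlog
      nlinarith [hlog]
    have hmono : Real.log ((S n).card) ≤ Real.log (sepNum f (n+1) ε) :=
      Real.log_le_log hcardpos (by exact_mod_cast hcard_le n)
    linarith
  have hbd : IsBoundedUnder (· ≤ ·) atTop (fun n : ℕ => Real.log (sepNum f n ε) / n) :=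
    isBoundedUnder_of_eventually_le (eventually_sepNum_le hβ hε hexp hε hT)
  have hv : Tendsto (fun n : ℕ => (s:ℝ) * ((n:ℝ) * Real.log β - Real.log (2*ε)) / ((n:ℝ)+1)) atTop
      (nhds ((s:ℝ) * Real.log β)) := by
    have h1 : Tendsto (fun n : ℕ => (n:ℝ)/((n:ℝ)+1)) atTop (nhds 1) :=
      tendsto_natCast_div_add_atTop 1
    have h2 : Tendsto (fun n : ℕ => 1/((n:ℝ)+1)) atTop (nhds 0) :=
      tendsto_one_div_add_atTop_nhds_zero_nat
    have h3 := (h1.const_mul ((s:ℝ) * Real.log β)).sub (h2.const_mul ((s:ℝ) * Real.log (2*ε)))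
    rw [mul_one, mul_zero, sub_zero] at h3
    convert h3 using 2 with n
    have hne : ((n:ℝ)+1) ≠ 0 := by positivity
    field_simp
  refine le_of_forall_sub_le fun η hη => ?_
  have hvev : ∀ᶠ n : ℕ in atTop, (s:ℝ)*Real.log β - η <
      (s:ℝ) * ((n:ℝ) * Real.log β - Real.log (2*ε)) / ((n:ℝ)+1) :=
    hv.eventually (eventually_gt_nhds (by linarith))
  have hfin : ∀ᶠ n : ℕ in atTop,
      (s:ℝ)*Real.log β - η ≤ Real.log (sepNum f (n+1) ε) / ((n:ℝ)+1) := by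
    filter_upwards [hvev, hlogb] with n h1 h2
    have hd : (0:ℝ) < (n:ℝ)+1 := by positivity
    have h4 : (s:ℝ) * ((n:ℝ) * Real.log β - Real.log (2*ε)) / ((n:ℝ)+1) ≤
        Real.log (sepNum f (n+1) ε) / ((n:ℝ)+1) := by gcongr
    linarith
  obtain ⟨N, hN⟩ := eventually_atTop.1 hfin
  apply le_limsup_of_frequently_le _ hbd
  apply Eventually.frequently
  rw [eventually_atTop]
  refine ⟨N+1, fun m hm => ?_⟩
  obtain ⟨n, rfl⟩ : ∃ n, m = n + 1 := ⟨m - 1, by omega⟩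
  have h5 := hN n (by omega)
  convert h5 using 2
  · rfl
  push_cast
  rfl

end Aux

/-- If the local skewness `SL_d(f)` of a continuous map `f` of a compact
metric space exceeds `1`, then `h_top(f) ≥ HD(d) · ln SL_d(f)`.  Here `β` is any lower
bound for the local expansion realized on some scale `ε > 0`, so that `β ≤ SL_d(f)`;
quantifying over all such `β` yields the statement for the supremum `SL_d(f)` itself. -/
theorem statement18 {Y : Type*} [MetricSpace Y] [CompactSpace Y]
    (f : Y → Y) (hf : Continuous f) (β : ℝ) (hβ : 1 < β)
    (hloc : ∃ ε > (0:ℝ), ∀ x y : Y, 0 < dist x y → dist x y < ε →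
      β * dist x y ≤ dist (f x) (f y)) :
    (dimH (Set.univ : Set Y)).toReal * Real.log β ≤ htop f := by
  obtain ⟨ε, hε, hexp⟩ := hloc
  obtain ⟨T, hT⟩ := exists_net (Y := Y) (ε/2) (by linarith)
  set L := limsup (fun n : ℕ => Real.log (sepNum f n ε) / n) atTop with hL_def
  have hLmem : L ∈ {h : ℝ | ∃ ε' > (0:ℝ),
      h = limsup (fun n : ℕ => Real.log (sepNum f n ε') / n) atTop} := ⟨ε, hε, rfl⟩
  have hbddS : BddAbove {h : ℝ | ∃ ε' > (0:ℝ),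
      h = limsup (fun n : ℕ => Real.log (sepNum f n ε') / n) atTop} := by
    refine ⟨2 * Real.log T.card, ?_⟩
    rintro h ⟨δ, hδ, rfl⟩
    exact limsup_sepNum_le hβ hε hexp hδ hT
  have hL : L ≤ htop f := le_csSup hbddS hLmem
  have hL0 : 0 ≤ L :=
    le_limsup_of_frequently_le
      (Eventually.frequently (Eventually.of_forall (sepNum_seq_nonneg f ε)))
      (isBoundedUnder_of_eventually_le (eventually_sepNum_le hβ hε hexp hε hT))
  have hlogβ : 0 < Real.log β := Real.log_pos hβ
  apply le_of_forall_lt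
  intro c hc
  rcases lt_or_ge c 0 with hc0 | hc0
  · exact lt_of_lt_of_le hc0 (le_trans hL0 hL)
  · set D := (dimH (Set.univ : Set Y)).toReal with hD_def
    have hD : c / Real.log β < D := (div_lt_iff₀ hlogβ).2 hc
    have hDpos : 0 < D := lt_of_le_of_lt (div_nonneg hc0 hlogβ.le) hD
    have htop_ne : dimH (Set.univ : Set Y) ≠ ⊤ := by
      intro htp
      rw [hD_def, htp, ENNReal.toReal_top] at hDpos
      exact lt_irrefl 0 hDpos
    obtain ⟨s', hs1, hs2⟩ := exists_between hD
    have hs'0 : 0 ≤ s' := le_trans (div_nonneg hc0 hlogβ.le) hs1.le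
    set s : ℝ≥0 := ⟨s', hs'0⟩ with hs_def
    have hsdim : (s : ℝ≥0∞) < dimH (Set.univ : Set Y) := by
      rw [← ENNReal.toReal_lt_toReal ENNReal.coe_ne_top htop_ne] at *
      · exact hs2
    have hlower := le_limsup_sepNum hβ hε hexp hT s hsdim
    have hcs : c < (s:ℝ) * Real.log β := by
      have hcexp : c = (c / Real.log β) * Real.log β := by field_simp
      rw [hcexp]
      exact mul_lt_mul_of_pos_right hs1 hlogβ
    exact lt_of_lt_of_le hcs (le_trans hlower hL)
end
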